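/- Let G be a finite abelian group and 1 ≤ k ≤ r. The planted distribution D1, conditioned on the event that the instance is permissible (i.e., c(X) = 1), is the uniform distribution on the set of permissible instances; equivalently, for every X ∈ G^r with c(X) = 1, D1({X}) = 1/(C(r,k)·|G|^{r−1}). -/

import Mathlib

open Finset

/-- Number of k-SUM solutions of an instance `X ∈ G^r`: the number of `k`-element
subsets `S ⊆ {1,…,r}` with `∑_{i∈S} X i = 0`. -/
def numSol {G : Type} [AddCommGroup G] [DecidableEq G] (k : ℕ) {r : ℕ} (X : Fin r → G) : ℕ :=
  (((univ : Finset (Fin r)).powersetCard k).filter (fun S => ∑ i ∈ S, X i = 0)).card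

/-- Plant a solution at `S`: replace the entry at the smallest index `i` of `S` by
`-∑_{j∈S, j≠i} Y j`. -/
def plant {G : Type} [AddCommGroup G] {r : ℕ} (Y : Fin r → G) (S : Finset (Fin r)) :
    Fin r → G :=
  fun j =>
    if hS : S.Nonempty then
      if j = S.min' hS then -∑ i ∈ S.erase (S.min' hS), Y i else Y j
    else Y j

/-- The probability mass function of the planted distribution `D1` on `G^r`:
draw `Y` uniformly from `G^r` and an independent uniformly random `k`-element
subset `S`, and output `plant Y S`. -/
noncomputable def D1pmf {G : Type} [AddCommGroup G] [Fintype G] [DecidableEq G] (k : ℕ)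
    {r : ℕ} (X : Fin r → G) : ℝ :=
  (((univ : Finset ((Fin r → G) × Finset (Fin r))).filter
      (fun p => p.2.card = k ∧ plant p.1 p.2 = X)).card : ℝ)
    / ((Fintype.card G : ℝ) ^ r * (r.choose k : ℝ))

/-
Fix the unique solution `S₀` of `X`. A pair `(Y, S)` with `|S| = k` plants `X` only if `S` is a
solution of `X`, hence only if `S = S₀`; and for `S = S₀` the equation `plant Y S₀ = X` pins
down every entry of `Y` except the one at `min S₀`, which is overwritten. So exactly `|G|` of the
`|G|^r · C(r,k)` equally likely pairs produce `X`.
-/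

section Plant

variable {G : Type} [AddCommGroup G] {r : ℕ}

theorem plant_apply_of_ne_min' (Y : Fin r → G) {S : Finset (Fin r)} (hS : S.Nonempty)
    {j : Fin r} (hj : j ≠ S.min' hS) : plant Y S j = Y j := by
  simp [plant, hS, hj]

theorem plant_apply_min' (Y : Fin r → G) {S : Finset (Fin r)} (hS : S.Nonempty) :
    plant Y S (S.min' hS) = -∑ i ∈ S.erase (S.min' hS), Y i := by
  simp [plant, hS]

theorem sum_plant_eq_zero (Y : Fin r → G) {S : Finset (Fin r)} (hS : S.Nonempty) :
    ∑ i ∈ S, plant Y S i = 0 := by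
  rw [← add_sum_erase S _ (S.min'_mem hS), plant_apply_min',
    sum_congr rfl fun i hi => plant_apply_of_ne_min' Y hS (ne_of_mem_erase hi), neg_add_cancel]

theorem plant_eq_iff {X Y : Fin r → G} {S : Finset (Fin r)} (hS : S.Nonempty)
    (hX : ∑ i ∈ S, X i = 0) : plant Y S = X ↔ ∀ j ≠ S.min' hS, Y j = X j := by
  constructor
  · rintro rfl j hj
    exact (plant_apply_of_ne_min' Y hS hj).symm
  · intro hYX
    funext j
    by_cases hj : j = S.min' hS
    · have hsum : ∑ i ∈ S.erase (S.min' hS), Y i = ∑ i ∈ S.erase (S.min' hS), X i :=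
        sum_congr rfl fun i hi => hYX i (ne_of_mem_erase hi)
      rw [hj, plant_apply_min', hsum, eq_comm, eq_neg_iff_add_eq_zero,
        add_sum_erase S X (S.min'_mem hS), hX]
    · rw [plant_apply_of_ne_min' Y hS hj, hYX j hj]

theorem card_filter_plant_eq [Fintype G] [DecidableEq G] {X : Fin r → G} {S : Finset (Fin r)}
    (hS : S.Nonempty) (hX : ∑ i ∈ S, X i = 0) :
    #{Y | plant Y S = X} = Fintype.card G := by
  have himage : ({Y | plant Y S = X} : Finset (Fin r → G)) =
      univ.image (Function.update X (S.min' hS)) := by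
    ext Y
    simp only [mem_filter, mem_univ, true_and, mem_image, plant_eq_iff hS hX,
      Function.update_eq_iff]
    exact ⟨fun h => ⟨Y (S.min' hS), rfl, fun j hj => (h j hj).symm⟩,
      fun ⟨_, _, h⟩ j hj => (h j hj).symm⟩
  rw [himage, card_image_of_injective _ (Function.update_injective X _), card_univ]

theorem exists_unique_solution_of_numSol_eq_one [DecidableEq G] {k : ℕ} {X : Fin r → G}
    (hX : numSol k X = 1) :
    ∃ S₀, ∀ S : Finset (Fin r), S.card = k ∧ ∑ i ∈ S, X i = 0 ↔ S = S₀ := by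
  obtain ⟨S₀, hS₀⟩ := card_eq_one.mp hX
  refine ⟨S₀, fun S => ?_⟩
  rw [← mem_singleton (a := S₀), ← hS₀, mem_filter, mem_powersetCard,
    and_iff_right (subset_univ S)]

theorem card_filter_plant_eq_of_unique_solution [Fintype G] [DecidableEq G] {k : ℕ}
    (hk : 1 ≤ k) {X : Fin r → G} {S₀ : Finset (Fin r)}
    (hsol : ∀ S : Finset (Fin r), S.card = k ∧ ∑ i ∈ S, X i = 0 ↔ S = S₀) :
    #{p : (Fin r → G) × Finset (Fin r) | p.2.card = k ∧ plant p.1 p.2 = X} =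
      Fintype.card G := by
  have hne : ∀ {S : Finset (Fin r)}, S.card = k → S.Nonempty := fun h => card_pos.mp (by omega)
  obtain ⟨hS₀card, hS₀sum⟩ := (hsol S₀).mpr rfl
  have hpairs :
      ({p | p.2.card = k ∧ plant p.1 p.2 = X} : Finset ((Fin r → G) × Finset (Fin r))) =
      ({Y | plant Y S₀ = X} : Finset (Fin r → G)) ×ˢ {S₀} := by
    ext ⟨Y, S⟩
    simp only [mem_filter, mem_univ, true_and, mem_product, mem_singleton]
    constructor
    · rintro ⟨hcard, rfl⟩
      obtain rfl := (hsol S).mp ⟨hcard, sum_plant_eq_zero Y (hne hcard)⟩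
      exact ⟨rfl, rfl⟩
    · rintro ⟨hplant, rfl⟩
      exact ⟨hS₀card, hplant⟩
  rw [hpairs, card_product, card_singleton, mul_one,
    card_filter_plant_eq (hne hS₀card) hS₀sum]

end Plant

theorem D1_uniform_on_permissible_general
    (G : Type) [AddCommGroup G] [Fintype G] [DecidableEq G]
    (k r : ℕ) (hk : 1 ≤ k) (X : Fin r → G) (hX : numSol k X = 1) :
    D1pmf k X = 1 / ((r.choose k : ℝ) * (Fintype.card G : ℝ) ^ (r - 1)) := by
  obtain ⟨S₀, hsol⟩ := exists_unique_solution_of_numSol_eq_one hX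
  have hkr : k ≤ r := by simpa [((hsol S₀).mpr rfl).1] using card_le_univ S₀
  have hG : (Fintype.card G : ℝ) ≠ 0 := by exact_mod_cast Fintype.card_ne_zero
  rw [D1pmf, card_filter_plant_eq_of_unique_solution hk hsol,
    ← Nat.sub_add_cancel (hk.trans hkr), pow_succ, Nat.add_sub_cancel]
  field_simp

/-- **The planted distribution conditioned on permissibility is uniform.**
For every permissible instance `X` (i.e. `c(X) = 1`),
`D1({X}) = 1/(C(r,k)·|G|^{r−1})`; in particular the conditional distribution of
`D1` given permissibility is uniform on the set of permissible instances. -/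
theorem D1_uniform_on_permissible
    (G : Type) [AddCommGroup G] [Fintype G] [DecidableEq G]
    (k r : ℕ) (hk : 1 ≤ k) (hkr : k ≤ r) (X : Fin r → G) (hX : numSol k X = 1) :
    D1pmf k X = 1 / ((r.choose k : ℝ) * (Fintype.card G : ℝ) ^ (r - 1)) :=
  D1_uniform_on_permissible_general G k r hk X hX
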